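/- (Independence-of-height lemma from the proof of Lemma 5.1.) Let Γ ⊆ ℝⁿ be a nonempty closed convex acute cone, C := int Γ*. Let F be holomorphic on T^C and suppose that for every compact set K ⊆ C there is C_K > 0 with |F(x + iy)| ≤ C_K (1 + |x|)^{−n−2} for all x ∈ ℝⁿ and y ∈ K. Then the function g(ξ, y) := e^{ξ·y} ∫_{ℝⁿ} F(x + iy) e^{−iξ·x} dx is independent of y ∈ C: for all ξ ∈ ℝⁿ and all y₁, y₂ ∈ C one has g(ξ, y₁) = g(ξ, y₂). -/

import Mathlib

open scoped BigOperators
open Complex MeasureTheory Metric Filter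

noncomputable section

/-- `ℝⁿ` as a Euclidean space. -/
abbrev Rn (n : ℕ) := EuclideanSpace ℝ (Fin n)
/-- `ℂⁿ` as a Euclidean space. -/
abbrev Cn (n : ℕ) := EuclideanSpace ℂ (Fin n)

/-- Real dot product `x·y`. -/
def rdot {n : ℕ} (x y : Rn n) : ℝ := ∑ i, x i * y i

/-- The pairing `z·ξ` of a complex vector with a real vector. -/
def cdot {n : ℕ} (z : Cn n) (ξ : Rn n) : ℂ := ∑ i, z i * (ξ i : ℂ)

/-- Imaginary part of a complex vector. -/
def imPart {n : ℕ} (z : Cn n) : Rn n := WithLp.toLp 2 (fun i => (z i).im)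
/-- Real part of a complex vector. -/
def rePart {n : ℕ} (z : Cn n) : Rn n := WithLp.toLp 2 (fun i => (z i).re)
/-- The complex vector `x + i y`. -/
def cmk {n : ℕ} (x y : Rn n) : Cn n := WithLp.toLp 2 (fun i => (⟨x i, y i⟩ : ℂ))

/-- Conjugate cone `Γ* = {y : y·u ≥ 0 ∀ u ∈ Γ}`. -/
def conjCone {n : ℕ} (Γ : Set (Rn n)) : Set (Rn n) := {y | ∀ u ∈ Γ, 0 ≤ rdot y u}

/-- Tube domain `T^C = ℝⁿ + iC`. -/
def tube {n : ℕ} (C : Set (Rn n)) : Set (Cn n) := {z | imPart z ∈ C}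

/-- Distance to the boundary of `C`. -/
def dB {n : ℕ} (C : Set (Rn n)) (y : Rn n) : ℝ := Metric.infDist y (frontier C)

/-- Associated function `M(t) = sup_p log (t^p M 0 / M p)`, `M(0) = 0`. -/
def assoc (M : ℕ → ℝ) (t : ℝ) : ℝ :=
  if t = 0 then 0 else ⨆ p : ℕ, Real.log (t ^ p * M 0 / M p)

/-- Cone with vertex at the origin. -/
def IsConeAt0 {n : ℕ} (Γ : Set (Rn n)) : Prop := ∀ x ∈ Γ, ∀ c : ℝ, 0 ≤ c → c • x ∈ Γ

/-- `L_p = ℓ_1 ⋯ ℓ_p` (here indexed from `0`). -/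
def Lprod (ℓ : ℕ → ℝ) (p : ℕ) : ℝ := ∏ j ∈ Finset.range p, ℓ j

variable {n : ℕ} {F : Type*} [NormedAddCommGroup F] [NormedSpace ℝ F]

/-- Partial derivative along coordinate `i`. -/
def pdv (i : Fin n) (f : Rn n → F) : Rn n → F :=
  fun x => fderiv ℝ f x (EuclideanSpace.single i 1)

/-- Multi-index partial derivative `∂^α`. -/
def mdv (α : Fin n → ℕ) (f : Rn n → F) : Rn n → F :=
  ((List.ofFn fun i : Fin n => (pdv i)^[α i]).foldr (· ∘ ·) id) f

/-- Pointwise Gelfand–Shilov bound: `|t^β ∂^α φ(t)| ≤ C ℓ^{|α|+|β|} M_{|α|} N_{|β|}`. -/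
def gsBound (M N : ℕ → ℝ) (ℓ C : ℝ) (φ : Rn n → ℂ) : Prop :=
  ∀ (α β : Fin n → ℕ) (t : Rn n),
    (∏ i, |t i| ^ β i) * ‖mdv α φ t‖ ≤
      C * ℓ ^ ((∑ i, α i) + ∑ i, β i) * M (∑ i, α i) * N (∑ i, β i)

/-- Membership in the Beurling Gelfand–Shilov space `S^{(M_p)}_{(N_p)}(ℝⁿ)`. -/
def gsMem (M N : ℕ → ℝ) (φ : Rn n → ℂ) : Prop :=
  ContDiff ℝ (⊤ : ℕ∞) φ ∧ ∀ ℓ > (0:ℝ), ∃ C : ℝ, gsBound M N ℓ C φ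

/-- The continuity estimate `|⟨f,φ⟩| ≤ C ‖φ‖_ℓ` for a functional `f`. -/
def ultraBdd (M N : ℕ → ℝ) (C ℓ : ℝ) (f : (Rn n → ℂ) →ₗ[ℂ] ℂ) : Prop :=
  ∀ φ, gsMem M N φ → ∀ B : ℝ, gsBound M N ℓ B φ → ‖f φ‖ ≤ C * B

/-- `f ∈ S'^{(M_p)}_{(N_p)}(ℝⁿ)`. -/
def isUltra (M N : ℕ → ℝ) (f : (Rn n → ℂ) →ₗ[ℂ] ℂ) : Prop :=
  ∃ C > (0:ℝ), ∃ ℓ > (0:ℝ), ultraBdd M N C ℓ f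

/-- `f` is supported in `Γ`. -/
def suppIn (M N : ℕ → ℝ) (Γ : Set (Rn n)) (f : (Rn n → ℂ) →ₗ[ℂ] ℂ) : Prop :=
  ∀ φ, gsMem M N φ → tsupport φ ∩ Γ = ∅ → f φ = 0

/-- Laplace transform `L{f}(z) = ⟨f(ξ), η(ξ) e^{iz·ξ}⟩` relative to a cutoff `η`. -/
def lap (η : Rn n → ℝ) (f : (Rn n → ℂ) →ₗ[ℂ] ℂ) (z : Cn n) : ℂ :=
  f (fun ξ => (η ξ : ℂ) * Complex.exp (Complex.I * cdot z ξ))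

/-- `η` is an admissible cutoff for the Laplace transform. -/
def isCutoff (M N : ℕ → ℝ) (Γ : Set (Rn n)) (C : Set (Rn n)) (η : Rn n → ℝ) : Prop :=
  ContDiff ℝ (⊤ : ℕ∞) η ∧ (∃ ε > (0:ℝ), ∀ ξ ∈ Metric.thickening ε Γ, η ξ = 1) ∧
  ∀ z ∈ tube C, gsMem M N (fun ξ => (η ξ : ℂ) * Complex.exp (Complex.I * cdot z ξ))

/-- `ψ ∈ D^{(M_p)}(ℝⁿ)`. -/
def isUltraDiffCpt {n : ℕ} (M : ℕ → ℝ) (ψ : Rn n → ℂ) : Prop :=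
  ContDiff ℝ (⊤ : ℕ∞) ψ ∧ HasCompactSupport ψ ∧
  ∀ h > (0:ℝ), ∃ C : ℝ, ∀ (α : Fin n → ℕ) (x : Rn n),
    ‖mdv α ψ x‖ ≤ C * h ^ (∑ i, α i) * M (∑ i, α i)

/-- Condition (M.1): log-convexity. -/
def M1cond (M : ℕ → ℝ) : Prop := ∀ p : ℕ, M (p+1) ^ 2 ≤ M p * M (p+2)
/-- Condition (M.2)'. -/
def M2'cond (M : ℕ → ℝ) : Prop := ∃ A ≥ (1:ℝ), ∃ H ≥ (1:ℝ), ∀ p : ℕ, M (p+1) ≤ A * H ^ p * M p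
/-- Condition (M.2). -/
def M2cond (M : ℕ → ℝ) : Prop :=
  ∃ A ≥ (1:ℝ), ∃ H ≥ (1:ℝ), ∀ p q : ℕ, M (p+q) ≤ A * H ^ (p+q) * M p * M q
/-- Condition (M.3)': `Σ M_{p-1}/M_p < ∞`. -/
def M3'cond (M : ℕ → ℝ) : Prop := Summable fun p : ℕ => M p / M (p+1)
/-- Condition (M.3): `Σ_{p≥q} M_{p-1}/M_p ≤ c₀ q M_{q-1}/M_q`. -/
def M3cond (M : ℕ → ℝ) : Prop :=
  ∃ c₀ > (0:ℝ), ∀ q : ℕ, (∑' j : ℕ, M (q+j) / M (q+j+1)) ≤ c₀ * (q+1) * (M q / M (q+1))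
/-- The sequence `M_p / p!`. -/
def fstar (M : ℕ → ℝ) : ℕ → ℝ := fun p => M p / p.factorial
/-- Condition (M.1)*: `M_p/p!` is log-convex. -/
def M1starCond (M : ℕ → ℝ) : Prop := M1cond (fstar M)
/-- `p! ≺ N_p`. -/
def factPrec (N : ℕ → ℝ) : Prop :=
  ∀ h > (0:ℝ), ∃ L > (0:ℝ), ∀ p : ℕ, (p.factorial : ℝ) ≤ L * h ^ p * N p

-- real inclusion
def reL (n : ℕ) : Rn n →L[ℝ] Cn n :=
  LinearMap.toContinuousLinearMap
  { toFun := fun x => (WithLp.toLp 2 (fun i => (x i : ℂ)) : Cn n)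
    map_add' := by intro x y; ext i; push_cast [PiLp.add_apply]; ring
    map_smul' := by intro c x; ext i; simp [PiLp.smul_apply, Complex.ofReal_mul, smul_eq_mul] }
def imL (n : ℕ) : Rn n →L[ℝ] Cn n :=
  LinearMap.toContinuousLinearMap
  { toFun := fun x => (WithLp.toLp 2 (fun i => (x i : ℂ) * Complex.I) : Cn n)
    map_add' := by intro x y; ext i; push_cast [PiLp.add_apply]; ring
    map_smul' := by intro c x; ext i; simp [PiLp.smul_apply, Complex.ofReal_mul, smul_eq_mul]; ring }
def imP (n : ℕ) : Cn n →L[ℝ] Rn n :=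
  LinearMap.toContinuousLinearMap
  { toFun := fun z => (WithLp.toLp 2 (fun i => (z i).im) : Rn n)
    map_add' := by intro x y; ext i; simp [PiLp.add_apply]
    map_smul' := by intro c x; ext i; simp [PiLp.smul_apply, Complex.real_smul] }
def reP (n : ℕ) : Cn n →L[ℝ] Rn n :=
  LinearMap.toContinuousLinearMap
  { toFun := fun z => (WithLp.toLp 2 (fun i => (z i).re) : Rn n)
    map_add' := by intro x y; ext i; simp [PiLp.add_apply]
    map_smul' := by intro c x; ext i; simp [PiLp.smul_apply, Complex.real_smul] }

instance (n : ℕ) : MeasurableSpace (Cn n) := borel _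
instance (n : ℕ) : BorelSpace (Cn n) := ⟨rfl⟩

lemma imP_eq {n : ℕ} (z : Cn n) : imP n z = imPart z := rfl
lemma reP_eq {n : ℕ} (z : Cn n) : reP n z = rePart z := rfl
lemma cmk_eq {n : ℕ} (x y : Rn n) : cmk x y = reL n x + imL n y := by
  ext i
  simp [cmk, reL, imL, Complex.ext_iff, PiLp.add_apply]
lemma cmk_re_im {n : ℕ} (z : Cn n) : cmk (rePart z) (imPart z) = z := by
  ext i; simp [cmk, rePart, imPart, Complex.ext_iff]
lemma imPart_cmk {n : ℕ} (x y : Rn n) : imPart (cmk x y) = y := by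
  ext i; simp [cmk, imPart]
lemma rePart_cmk {n : ℕ} (x y : Rn n) : rePart (cmk x y) = x := by
  ext i; simp [cmk, rePart]

lemma norm_reL {n : ℕ} (x : Rn n) : ‖reL n x‖ = ‖x‖ := by
  rw [EuclideanSpace.norm_eq, EuclideanSpace.norm_eq]
  congr 1; apply Finset.sum_congr rfl; intro i _
  simp [reL]
lemma norm_imL {n : ℕ} (x : Rn n) : ‖imL n x‖ = ‖x‖ := by
  rw [EuclideanSpace.norm_eq, EuclideanSpace.norm_eq]
  congr 1; apply Finset.sum_congr rfl; intro i _
  simp [imL]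
lemma norm_imP_le {n : ℕ} (z : Cn n) : ‖imP n z‖ ≤ ‖z‖ := by
  rw [EuclideanSpace.norm_eq, EuclideanSpace.norm_eq]
  apply Real.sqrt_le_sqrt
  apply Finset.sum_le_sum; intro i _
  have : |(z i).im| ≤ ‖z i‖ := Complex.abs_im_le_norm _
  simpa [imP] using pow_le_pow_left₀ (abs_nonneg _) this 2
lemma norm_reP_le {n : ℕ} (z : Cn n) : ‖reP n z‖ ≤ ‖z‖ := by
  rw [EuclideanSpace.norm_eq, EuclideanSpace.norm_eq]
  apply Real.sqrt_le_sqrt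
  apply Finset.sum_le_sum; intro i _
  have : |(z i).re| ≤ ‖z i‖ := Complex.abs_re_le_norm _
  simpa [reP] using pow_le_pow_left₀ (abs_nonneg _) this 2

lemma isOpen_tube {n : ℕ} {C : Set (Rn n)} (hC : IsOpen C) : IsOpen (tube C) := by
  have : tube C = (imP n) ⁻¹' C := rfl
  rw [this]
  exact hC.preimage (imP n).continuous

lemma imL_eq_smul {n : ℕ} (x : Rn n) : imL n x = Complex.I • reL n x := by
  ext i; simp [imL, reL, PiLp.smul_apply]; ring

lemma integrable_decay {n : ℕ} (M : ℝ) (f : Rn n → ℂ)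
    (hm : AEStronglyMeasurable f (volume : Measure (Rn n)))
    (hb : ∀ x : Rn n, ‖f x‖ ≤ M * ((1 + ‖x‖) ^ (n + 2))⁻¹) :
    Integrable f := by
  have h1 : Integrable (fun x : Rn n => (1 + ‖x‖) ^ (-((n : ℝ) + 2))) (volume : Measure (Rn n)) := by
    apply integrable_one_add_norm
    rw [finrank_euclideanSpace_fin]; linarith
  have h2 : Integrable (fun x : Rn n => M * ((1 + ‖x‖) ^ (n + 2))⁻¹) := by
    have he : (fun x : Rn n => M * ((1 + ‖x‖) ^ (n + 2))⁻¹)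
        = fun x : Rn n => M * (1 + ‖x‖) ^ (-((n : ℝ) + 2)) := by
      funext x
      have h0 : (0:ℝ) ≤ 1 + ‖x‖ := by positivity
      rw [Real.rpow_neg h0, show ((n : ℝ) + 2) = ((n + 2 : ℕ) : ℝ) by push_cast; ring,
        Real.rpow_natCast]
    rw [he]
    exact h1.const_mul M
  exact h2.mono' hm (Filter.Eventually.of_forall (fun x => by simpa using hb x))

lemma cauchy_bound {n : ℕ} {G : Cn n → ℂ} {S : Set (Cn n)} (hS : IsOpen S)
    (hG : DifferentiableOn ℂ G S) {z : Cn n} {r A : ℝ} (hr : 0 < r)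
    (hball : closedBall z r ⊆ S) (hA : ∀ w ∈ closedBall z r, ‖G w‖ ≤ A)
    (u : Cn n) : ‖fderiv ℂ G z u‖ ≤ A / r * ‖u‖ := by
  have hA0 : 0 ≤ A := le_trans (norm_nonneg _) (hA z (mem_closedBall_self hr.le))
  rcases eq_or_ne u 0 with rfl | hu
  · simp [div_nonneg hA0 hr.le]
  have hun : ‖u‖ ≠ 0 := norm_ne_zero_iff.mpr hu
  set u' : Cn n := ‖u‖⁻¹ • u with hu'
  have hu'n : ‖u'‖ = 1 := by
    rw [hu', norm_smul]; simp [hun, _root_.abs_of_nonneg (norm_nonneg u)]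
  set ψ : ℂ → ℂ := fun w => G (z + w • u') with hψ
  have hmem : ∀ w : ℂ, ‖w‖ ≤ r → z + w • u' ∈ S := by
    intro w hw
    apply hball
    simp only [mem_closedBall, dist_eq_norm, add_sub_cancel_left, norm_smul, hu'n, mul_one]
    exact hw
  have hdiff : ∀ w : ℂ, ‖w‖ ≤ r → DifferentiableAt ℂ ψ w := by
    intro w hw
    have h1 : DifferentiableAt ℂ (fun w : ℂ => z + w • u') w :=
      (differentiableAt_id.smul_const u').const_add z
    have h2 : DifferentiableAt ℂ G (z + w • u') :=
      hG.differentiableAt (hS.mem_nhds (hmem w hw))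
    exact h2.comp w h1
  have hdcc : DiffContOnCl ℂ ψ (ball 0 r) := by
    constructor
    · intro w hw
      exact (hdiff w (mem_ball_zero_iff.mp hw).le).differentiableWithinAt
    · have hcl : closure (ball (0:ℂ) r) = closedBall 0 r := closure_ball 0 hr.ne'
      intro w hw
      rw [hcl] at hw
      exact (hdiff w (mem_closedBall_zero_iff.mp hw)).continuousAt.continuousWithinAt
  have hder : HasDerivAt ψ (fderiv ℂ G z u') 0 := by
    have h1 : HasDerivAt (fun w : ℂ => z + w • u') u' 0 := by
      simpa using ((hasDerivAt_id (0:ℂ)).smul_const u').const_add z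
    have h2 : HasFDerivAt G (fderiv ℂ G z) z :=
      (hG.differentiableAt (hS.mem_nhds (by simpa using hmem 0 (by simp [hr.le])))).hasFDerivAt
    have h2' : HasFDerivAt G (fderiv ℂ G z) (z + (0:ℂ) • u') := by simpa using h2
    exact h2'.comp_hasDerivAt 0 h1
  have hballs : ∀ w ∈ sphere (0:ℂ) r, ‖ψ w‖ ≤ A := by
    intro w hw
    apply hA
    simp only [mem_sphere, dist_eq_norm, sub_zero] at hw
    simp [mem_closedBall, dist_eq_norm, norm_smul, hu'n, hw]
  have key : ‖deriv ψ 0‖ ≤ A / r :=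
    Complex.norm_deriv_le_of_forall_mem_sphere_norm_le hr hdcc hballs
  rw [hder.deriv] at key
  have hrw : fderiv ℂ G z u = ‖u‖ • fderiv ℂ G z u' := by
    rw [hu', (fderiv ℂ G z).map_smul_of_tower, smul_smul, mul_inv_cancel₀ hun, one_smul]
  rw [hrw, norm_smul, Real.norm_eq_abs, _root_.abs_of_nonneg (norm_nonneg u)]
  calc ‖u‖ * ‖fderiv ℂ G z u'‖ ≤ ‖u‖ * (A / r) := by
        exact mul_le_mul_of_nonneg_left key (norm_nonneg u)
    _ = A / r * ‖u‖ := by ring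

lemma integrable_inv_pow {n : ℕ} :
    Integrable (fun x : Rn n => ((1 + ‖x‖) ^ (n + 2))⁻¹) (volume : Measure (Rn n)) := by
  have h1 : Integrable (fun x : Rn n => (1 + ‖x‖) ^ (-((n : ℝ) + 2))) (volume : Measure (Rn n)) := by
    apply integrable_one_add_norm
    rw [finrank_euclideanSpace_fin]; linarith
  have he : (fun x : Rn n => ((1 + ‖x‖) ^ (n + 2))⁻¹)
      = fun x : Rn n => (1 + ‖x‖) ^ (-((n : ℝ) + 2)) := by
    funext x
    have h0 : (0:ℝ) ≤ 1 + ‖x‖ := by positivity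
    rw [Real.rpow_neg h0, show ((n : ℝ) + 2) = ((n + 2 : ℕ) : ℝ) by push_cast; ring,
      Real.rpow_natCast]
  rw [he]; exact h1

lemma key {n : ℕ} (Cs : Set (Rn n)) (hCo : IsOpen Cs) (hCc : Convex ℝ Cs)
    (G : Cn n → ℂ) (hG : DifferentiableOn ℂ G (tube Cs))
    (hdec : ∀ K ⊆ Cs, IsCompact K → ∃ M : ℝ, ∀ x : Rn n, ∀ y ∈ K,
       ‖G (cmk x y)‖ ≤ M * ((1 + ‖x‖) ^ (n + 2))⁻¹) :
    ∀ y₁ ∈ Cs, ∀ y₂ ∈ Cs, (∫ x : Rn n, G (cmk x y₁)) = ∫ x : Rn n, G (cmk x y₂) := by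
  have hto : IsOpen (tube Cs) := isOpen_tube hCo
  have hmem : ∀ (x y : Rn n), y ∈ Cs → cmk x y ∈ tube Cs := by
    intro x y hy
    simp only [tube, Set.mem_setOf_eq, imPart_cmk]
    exact hy
  have hcmkcont : ∀ y : Rn n, Continuous (fun x : Rn n => cmk x y) := by
    intro y
    have : (fun x : Rn n => cmk x y) = fun x => reL n x + imL n y :=
      funext (fun x => cmk_eq x y)
    rw [this]
    exact (reL n).continuous.add continuous_const
  have hΦcont : ∀ y ∈ Cs, Continuous (fun x : Rn n => G (cmk x y)) := by
    intro y hy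
    exact hG.continuousOn.comp_continuous (hcmkcont y) (fun x => hmem x y hy)
  have hΦdiff : ∀ y ∈ Cs, ∀ x : Rn n, HasFDerivAt (fun x : Rn n => G (cmk x y))
      (((fderiv ℂ G (cmk x y)).restrictScalars ℝ).comp (reL n)) x := by
    intro y hy x
    have h1 : HasFDerivAt (fun x : Rn n => cmk x y) (reL n) x := by
      have : (fun x : Rn n => cmk x y) = fun x => reL n x + imL n y :=
        funext (fun x => cmk_eq x y)
      rw [this]
      exact (reL n).hasFDerivAt.add_const _
    have h2 : HasFDerivAt G ((fderiv ℂ G (cmk x y)).restrictScalars ℝ) (cmk x y) :=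
      ((hG.differentiableAt (hto.mem_nhds (hmem x y hy))).hasFDerivAt).restrictScalars ℝ
    exact h2.comp x h1
  have hΨdiff : ∀ y ∈ Cs, ∀ x : Rn n, HasFDerivAt (fun y : Rn n => G (cmk x y))
      (((fderiv ℂ G (cmk x y)).restrictScalars ℝ).comp (imL n)) y := by
    intro y hy x
    have h1 : HasFDerivAt (fun y : Rn n => cmk x y) (imL n) y := by
      have : (fun y : Rn n => cmk x y) = fun y => imL n y + reL n x := by
        funext y; rw [cmk_eq]; abel
      rw [this]
      exact (imL n).hasFDerivAt.add_const _
    have h2 : HasFDerivAt G ((fderiv ℂ G (cmk x y)).restrictScalars ℝ) (cmk x y) :=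
      ((hG.differentiableAt (hto.mem_nhds (hmem x y hy))).hasFDerivAt).restrictScalars ℝ
    exact h2.comp y h1
  -- the function of the height
  set h : Rn n → ℂ := fun y => ∫ x : Rn n, G (cmk x y) with hh
  have hkey : ∀ y₀ ∈ Cs, HasFDerivAt h (0 : Rn n →L[ℝ] ℂ) y₀ := by
    intro y₀ hy₀
    obtain ⟨ε, hε, hball⟩ := Metric.isOpen_iff.mp hCo y₀ hy₀
    set r : ℝ := ε / 4 with hrdef
    have hr : 0 < r := by positivity
    have hK : closedBall y₀ (3 * r) ⊆ Cs := by
      intro y hy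
      apply hball
      rw [mem_ball]
      calc dist y y₀ ≤ 3 * r := mem_closedBall.mp hy
        _ < ε := by rw [hrdef]; linarith
    obtain ⟨M₀, hM₀⟩ := hdec (closedBall y₀ (3 * r)) hK (isCompact_closedBall _ _)
    set M : ℝ := max M₀ 0 with hMdef
    have hM : ∀ x : Rn n, ∀ y ∈ closedBall y₀ (3 * r),
        ‖G (cmk x y)‖ ≤ M * ((1 + ‖x‖) ^ (n + 2))⁻¹ := by
      intro x y hy
      refine (hM₀ x y hy).trans ?_
      apply mul_le_mul_of_nonneg_right (le_max_left _ _)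
      positivity
    have hMpos : 0 ≤ M := le_max_right _ _
    set B : ℝ := M * (1 + r) ^ (n + 2) / r with hBdef
    have hBpos : 0 ≤ B := by positivity
    -- Cauchy-type bound on the derivative of G
    have hDG : ∀ y ∈ closedBall y₀ (2 * r), ∀ x : Rn n, ∀ u : Cn n,
        ‖fderiv ℂ G (cmk x y) u‖ ≤ B * ((1 + ‖x‖) ^ (n + 2))⁻¹ * ‖u‖ := by
      intro y hy x u
      have himb : ∀ w ∈ closedBall (cmk x y) r, imPart w ∈ closedBall y₀ (3 * r) := by
        intro w hw
        rw [mem_closedBall]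
        have h1 : dist (imPart w) y ≤ r := by
          have heq : imPart w - y = imP n (w - cmk x y) := by
            rw [map_sub, imP_eq, imP_eq, imPart_cmk]
          rw [dist_eq_norm, heq]
          exact (norm_imP_le _).trans (mem_closedBall_iff_norm.mp hw)
        calc dist (imPart w) y₀ ≤ dist (imPart w) y + dist y y₀ := dist_triangle _ _ _
          _ ≤ r + 2 * r := add_le_add h1 (mem_closedBall.mp hy)
          _ = 3 * r := by ring
      have hsub : closedBall (cmk x y) r ⊆ tube Cs := by
        intro w hw
        exact hK (himb w hw)
      have hA : ∀ w ∈ closedBall (cmk x y) r,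
          ‖G w‖ ≤ M * (1 + r) ^ (n + 2) * ((1 + ‖x‖) ^ (n + 2))⁻¹ := by
        intro w hw
        have hre : ‖rePart w - x‖ ≤ r := by
          have heq : rePart w - x = reP n (w - cmk x y) := by
            rw [map_sub, reP_eq, reP_eq, rePart_cmk]
          rw [heq]
          exact (norm_reP_le _).trans (mem_closedBall_iff_norm.mp hw)
        have hGw : ‖G w‖ ≤ M * ((1 + ‖rePart w‖) ^ (n + 2))⁻¹ := by
          have := hM (rePart w) (imPart w) (himb w hw)
          rwa [cmk_re_im] at this
        refine hGw.trans ?_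
        rw [mul_assoc]
        apply mul_le_mul_of_nonneg_left _ hMpos
        have hx1 : (0:ℝ) < 1 + ‖x‖ := by positivity
        have hw1 : (0:ℝ) < 1 + ‖rePart w‖ := by positivity
        have hkey2 : 1 + ‖x‖ ≤ (1 + r) * (1 + ‖rePart w‖) := by
          have hxle : ‖x‖ ≤ ‖rePart w‖ + r := by
            calc ‖x‖ = ‖rePart w - (rePart w - x)‖ := by congr 1; abel
              _ ≤ ‖rePart w‖ + ‖rePart w - x‖ := norm_sub_le _ _
              _ ≤ ‖rePart w‖ + r := by linarith
          nlinarith [hr.le, norm_nonneg (rePart w)]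
        have hpow : (1 + ‖x‖) ^ (n + 2) ≤ (1 + r) ^ (n + 2) * (1 + ‖rePart w‖) ^ (n + 2) := by
          rw [← mul_pow]; exact pow_le_pow_left₀ hx1.le hkey2 _
        have hq : (1 + ‖x‖) ^ (n + 2) / (1 + r) ^ (n + 2) ≤ (1 + ‖rePart w‖) ^ (n + 2) := by
          rw [div_le_iff₀ (by positivity)]
          calc (1 + ‖x‖) ^ (n + 2) ≤ (1 + r) ^ (n + 2) * (1 + ‖rePart w‖) ^ (n + 2) := hpow
            _ = (1 + ‖rePart w‖) ^ (n + 2) * (1 + r) ^ (n + 2) := by ring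
        have hinv : ((1 + ‖rePart w‖) ^ (n + 2))⁻¹
            ≤ ((1 + ‖x‖) ^ (n + 2) / (1 + r) ^ (n + 2))⁻¹ :=
          inv_anti₀ (by positivity) hq
        rw [inv_div] at hinv
        calc ((1 + ‖rePart w‖) ^ (n + 2))⁻¹
            ≤ (1 + r) ^ (n + 2) / (1 + ‖x‖) ^ (n + 2) := hinv
          _ = (1 + r) ^ (n + 2) * ((1 + ‖x‖) ^ (n + 2))⁻¹ := div_eq_mul_inv _ _
      have hcb := cauchy_bound hto hG hr hsub hA u
      refine hcb.trans ?_
      apply mul_le_mul_of_nonneg_right _ (norm_nonneg u)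
      apply le_of_eq
      rw [hBdef]
      ring
    -- parametric derivative and its bound
    set F' : Rn n → Rn n → (Rn n →L[ℝ] ℂ) :=
      fun y x => ((fderiv ℂ G (cmk x y)).restrictScalars ℝ).comp (imL n) with hF'
    have hF'norm : ∀ y ∈ closedBall y₀ (2*r), ∀ x : Rn n,
        ‖F' y x‖ ≤ B * ((1 + ‖x‖) ^ (n + 2))⁻¹ := by
      intro y hy x
      apply ContinuousLinearMap.opNorm_le_bound _ (by positivity)
      intro u
      have hFu : F' y x u = fderiv ℂ G (cmk x y) (imL n u) := rfl
      rw [hFu]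
      calc ‖fderiv ℂ G (cmk x y) (imL n u)‖ ≤ B * ((1 + ‖x‖) ^ (n + 2))⁻¹ * ‖imL n u‖ :=
            hDG y hy x _
        _ = B * ((1 + ‖x‖) ^ (n + 2))⁻¹ * ‖u‖ := by rw [norm_imL]
    have hmeasDG : Measurable (fun x : Rn n => fderiv ℂ G (cmk x y₀)) :=
      (measurable_fderiv ℂ G).comp (hcmkcont y₀).measurable
    let Ψ : (Cn n →L[ℂ] ℂ) →ₗ[ℝ] (Rn n →L[ℝ] ℂ) :=
      { toFun := fun T => (T.restrictScalars ℝ).comp (imL n)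
        map_add' := by intro T S; ext u; simp
        map_smul' := by intro c T; ext u; simp }
    have hcontΨ : Continuous Ψ := Ψ.continuous_of_finiteDimensional
    have hF'meas : AEStronglyMeasurable (F' y₀) (volume : Measure (Rn n)) := by
      have : F' y₀ = fun x => Ψ (fderiv ℂ G (cmk x y₀)) := rfl
      rw [this]
      exact (hcontΨ.measurable.comp hmeasDG).aestronglyMeasurable
    have hΦint : ∀ y ∈ closedBall y₀ (3*r), Integrable (fun x : Rn n => G (cmk x y)) :=
      fun y hy => integrable_decay M _ ((hΦcont y (hK hy)).aestronglyMeasurable)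
        (fun x => hM x y hy)
    have hbint : Integrable (fun x : Rn n => B * ((1 + ‖x‖) ^ (n + 2))⁻¹)
        (volume : Measure (Rn n)) :=
      integrable_inv_pow.const_mul B
    have main : HasFDerivAt (fun y : Rn n => ∫ x : Rn n, G (cmk x y))
        (∫ x : Rn n, F' y₀ x) y₀ := by
      apply hasFDerivAt_integral_of_dominated_of_fderiv_le
        (bound := fun x : Rn n => B * ((1 + ‖x‖) ^ (n + 2))⁻¹) (ball_mem_nhds y₀ hr)
      · filter_upwards [hCo.mem_nhds hy₀] with y hy
        exact (hΦcont y hy).aestronglyMeasurable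
      · exact hΦint y₀ (mem_closedBall_self (by positivity))
      · exact hF'meas
      · apply Filter.Eventually.of_forall
        intro x y hy
        exact hF'norm y (mem_closedBall.mpr (by
          have := mem_ball.mp hy; linarith)) x
      · exact hbint
      · apply Filter.Eventually.of_forall
        intro x y hy
        exact hΨdiff y (hball (mem_ball.mpr (by
          have h1 := mem_ball.mp hy
          have h2 : r = ε / 4 := hrdef
          linarith))) x
    have hF'int : Integrable (F' y₀) (volume : Measure (Rn n)) := by
      refine hbint.mono' hF'meas ?_
      apply Filter.Eventually.of_forall
      intro x
      exact hF'norm y₀ (mem_closedBall_self (by positivity)) x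
    have hΦd : Differentiable ℝ (fun x : Rn n => G (cmk x y₀)) :=
      fun x => (hΦdiff y₀ hy₀ x).differentiableAt
    have hzero : (∫ x : Rn n, F' y₀ x) = 0 := by
      apply ContinuousLinearMap.ext
      intro v
      rw [ContinuousLinearMap.zero_apply, ContinuousLinearMap.integral_apply hF'int]
      have hv1 : ∀ x : Rn n, F' y₀ x v = Complex.I * (fderiv ℂ G (cmk x y₀) (reL n v)) := by
        intro x
        show fderiv ℂ G (cmk x y₀) (imL n v) = _
        rw [imL_eq_smul, ContinuousLinearMap.map_smul, smul_eq_mul]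
      simp_rw [hv1]
      rw [integral_const_mul]
      have hfd : ∀ x : Rn n, fderiv ℝ (fun x : Rn n => G (cmk x y₀)) x v
          = fderiv ℂ G (cmk x y₀) (reL n v) := by
        intro x
        rw [(hΦdiff y₀ hy₀ x).fderiv]
        rfl
      have hfint : Integrable (fun x : Rn n => fderiv ℝ (fun x : Rn n => G (cmk x y₀)) x v)
          (volume : Measure (Rn n)) := by
        refine (integrable_inv_pow.const_mul (B * ‖v‖)).mono' ?_ ?_
        · exact (measurable_fderiv_apply_const ℝ _ v).aestronglyMeasurable
        · apply Filter.Eventually.of_forall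
          intro x
          rw [hfd x]
          calc ‖fderiv ℂ G (cmk x y₀) (reL n v)‖
              ≤ B * ((1 + ‖x‖) ^ (n + 2))⁻¹ * ‖reL n v‖ :=
                hDG y₀ (mem_closedBall_self (by positivity)) x _
            _ = B * ‖v‖ * ((1 + ‖x‖) ^ (n + 2))⁻¹ := by rw [norm_reL]; ring
      have h1 := integral_mul_fderiv_eq_neg_fderiv_mul_of_integrable
        (f := fun x : Rn n => G (cmk x y₀)) (g := fun _ : Rn n => (1:ℂ)) (v := v)
        (by simpa using hfint)
        (by
          have : (fun x : Rn n => G (cmk x y₀) * fderiv ℝ (fun _ : Rn n => (1:ℂ)) x v)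
              = fun _ : Rn n => (0:ℂ) := by
            funext x; simp [fderiv_const]
          rw [this]
          exact integrable_zero _ _ _)
        (by simpa using hΦint y₀ (mem_closedBall_self (by positivity)))
        (fun x _ => hΦd x) (fun x _ => differentiableAt_const _)
      have hl : (∫ x : Rn n, G (cmk x y₀) * fderiv ℝ (fun _ : Rn n => (1:ℂ)) x v) = 0 := by
        have : (fun x : Rn n => G (cmk x y₀) * fderiv ℝ (fun _ : Rn n => (1:ℂ)) x v)
            = fun _ : Rn n => (0:ℂ) := by
          funext x; simp [fderiv_const]
        rw [this, integral_zero]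
      rw [hl] at h1
      have h2 : (∫ x : Rn n, fderiv ℝ (fun x : Rn n => G (cmk x y₀)) x v * 1) = 0 :=
        neg_eq_zero.mp h1.symm
      simp only [mul_one] at h2
      simp_rw [hfd] at h2
      rw [h2, mul_zero]
    have main' : HasFDerivAt h (∫ x : Rn n, F' y₀ x) y₀ := main
    rwa [hzero] at main'
  -- conclude by convexity
  intro y₁ hy₁ y₂ hy₂
  have hle := hCc.norm_image_sub_le_of_norm_hasFDerivWithin_le
    (f' := fun _ => (0 : Rn n →L[ℝ] ℂ)) (C := 0)
    (fun y hy => (hkey y hy).hasFDerivWithinAt) (fun y hy => by simp) hy₁ hy₂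
  rw [zero_mul] at hle
  have h0 : h y₂ - h y₁ = 0 := by
    rw [← norm_le_zero_iff]
    exact hle
  exact (sub_eq_zero.mp h0).symm

lemma rdot_comm {n : ℕ} (x y : Rn n) : rdot x y = rdot y x := by
  unfold rdot; exact Finset.sum_congr rfl (fun i _ => mul_comm _ _)

lemma convex_conjCone {n : ℕ} (Γ : Set (Rn n)) : Convex ℝ (conjCone Γ) := by
  intro y1 h1 y2 h2 a b ha hb hab
  intro u hu
  have e : rdot (a • y1 + b • y2) u = a * rdot y1 u + b * rdot y2 u := by
    unfold rdot
    rw [Finset.mul_sum, Finset.mul_sum, ← Finset.sum_add_distrib]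
    apply Finset.sum_congr rfl
    intro i _
    simp [PiLp.add_apply, PiLp.smul_apply, smul_eq_mul]
    ring
  rw [e]
  have := h1 u hu
  have := h2 u hu
  positivity

def cdotL {n : ℕ} (ξ : Rn n) : Cn n →L[ℂ] ℂ :=
  LinearMap.toContinuousLinearMap
  { toFun := fun z => cdot z ξ
    map_add' := by
      intro z w
      unfold cdot
      rw [← Finset.sum_add_distrib]
      exact Finset.sum_congr rfl (fun i _ => by simp [PiLp.add_apply]; ring)
    map_smul' := by
      intro c z
      show (∑ i, (c • z) i * (ξ i : ℂ)) = (RingHom.id ℂ c) • ∑ i, z i * (ξ i : ℂ)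
      rw [RingHom.id_apply, smul_eq_mul, Finset.mul_sum]
      exact Finset.sum_congr rfl (fun i _ => by
        rw [PiLp.smul_apply, smul_eq_mul]; ring) }

lemma cdotL_eq {n : ℕ} (ξ : Rn n) (z : Cn n) : cdotL ξ z = cdot z ξ := rfl

lemma cdot_cmk {n : ℕ} (x y ξ : Rn n) :
    cdot (cmk x y) ξ = (rdot x ξ : ℂ) + (rdot y ξ : ℂ) * Complex.I := by
  unfold cdot cmk rdot
  push_cast
  rw [Finset.sum_mul, ← Finset.sum_add_distrib]
  apply Finset.sum_congr rfl
  intro i _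
  rw [Complex.mk_eq_add_mul_I]
  ring

lemma inner_eq_rdot {n : ℕ} (x y : Rn n) : (inner ℝ x y : ℝ) = rdot x y := by
  unfold rdot
  rw [PiLp.inner_apply]
  exact Finset.sum_congr rfl (fun i _ => by simp [RCLike.inner_apply, mul_comm])

/-- independence-of-height lemma from the proof of Lemma 5.1. -/
theorem stmt13 {n : ℕ} (Γ : Set (Rn n)) (hΓne : Γ.Nonempty) (hΓcl : IsClosed Γ)
    (hΓconv : Convex ℝ Γ) (hΓcone : IsConeAt0 Γ)
    (C : Set (Rn n)) (hC : C = interior (conjCone Γ)) (hCne : C.Nonempty)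
    (F : Cn n → ℂ) (hFhol : DifferentiableOn ℂ F (tube C))
    (hdecay : ∀ K ⊆ C, IsCompact K → ∃ CK > (0:ℝ), ∀ (x : Rn n), ∀ y ∈ K,
      ‖F (cmk x y)‖ ≤ CK * ((1 + ‖x‖) ^ (n + 2))⁻¹)
    (g : Rn n → Rn n → ℂ)
    (hg : g = fun ξ y => (Real.exp (rdot ξ y) : ℂ) *
      ∫ x : Rn n, F (cmk x y) * Complex.exp (-Complex.I * (rdot ξ x : ℂ))) :
    ∀ (ξ : Rn n), ∀ y₁ ∈ C, ∀ y₂ ∈ C, g ξ y₁ = g ξ y₂ := by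
  subst hg
  intro ξ y₁ hy₁ y₂ hy₂
  have hCo : IsOpen C := hC ▸ isOpen_interior
  have hCc : Convex ℝ C := hC ▸ (convex_conjCone Γ).interior
  set G : Cn n → ℂ := fun z => F z * Complex.exp (-Complex.I * cdot z ξ) with hGdef
  have hGhol : DifferentiableOn ℂ G (tube C) := by
    apply hFhol.mul
    apply Differentiable.differentiableOn
    have he : (fun z : Cn n => Complex.exp (-Complex.I * cdot z ξ))
        = fun z => Complex.exp (-Complex.I * cdotL ξ z) := rfl
    rw [he]
    exact Complex.differentiable_exp.comp ((cdotL ξ).differentiable.const_mul (-Complex.I))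
  have hre : ∀ x y : Rn n, (-Complex.I * cdot (cmk x y) ξ).re = rdot y ξ := by
    intro x y
    rw [cdot_cmk]
    simp
  have hGdec : ∀ K ⊆ C, IsCompact K → ∃ M : ℝ, ∀ x : Rn n, ∀ y ∈ K,
      ‖G (cmk x y)‖ ≤ M * ((1 + ‖x‖) ^ (n + 2))⁻¹ := by
    intro K hKC hKcp
    obtain ⟨CK, hCK, hFb⟩ := hdecay K hKC hKcp
    obtain ⟨R, hR⟩ := hKcp.isBounded.subset_closedBall 0
    refine ⟨CK * Real.exp (R * ‖ξ‖), ?_⟩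
    intro x y hyK
    have hnorm : ‖G (cmk x y)‖ = ‖F (cmk x y)‖ * Real.exp (rdot y ξ) := by
      rw [hGdef]
      simp only [norm_mul]
      congr 1
      rw [Complex.norm_exp, hre]
    have hry : rdot y ξ ≤ R * ‖ξ‖ := by
      have h1 : (inner ℝ y ξ : ℝ) ≤ ‖y‖ * ‖ξ‖ := real_inner_le_norm y ξ
      rw [inner_eq_rdot] at h1
      have h2 : ‖y‖ ≤ R := mem_closedBall_zero_iff.mp (hR hyK)
      calc rdot y ξ ≤ ‖y‖ * ‖ξ‖ := h1
        _ ≤ R * ‖ξ‖ := mul_le_mul_of_nonneg_right h2 (norm_nonneg _)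
    rw [hnorm]
    calc ‖F (cmk x y)‖ * Real.exp (rdot y ξ)
        ≤ (CK * ((1 + ‖x‖) ^ (n + 2))⁻¹) * Real.exp (R * ‖ξ‖) := by
          apply mul_le_mul (hFb x y hyK) (Real.exp_le_exp.mpr hry) (Real.exp_pos _).le
          positivity
      _ = CK * Real.exp (R * ‖ξ‖) * ((1 + ‖x‖) ^ (n + 2))⁻¹ := by ring
  have hkeyres := key C hCo hCc G hGhol hGdec y₁ hy₁ y₂ hy₂
  have hgy : ∀ y : Rn n, (Real.exp (rdot ξ y) : ℂ) *
      ∫ x : Rn n, F (cmk x y) * Complex.exp (-Complex.I * (rdot ξ x : ℂ))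
      = ∫ x : Rn n, G (cmk x y) := by
    intro y
    rw [← integral_const_mul]
    congr 1
    funext x
    rw [hGdef]
    simp only
    rw [cdot_cmk, rdot_comm ξ y, rdot_comm ξ x]
    have hI : -Complex.I * ((rdot x ξ : ℂ) + (rdot y ξ : ℂ) * Complex.I)
        = (rdot y ξ : ℂ) + -Complex.I * (rdot x ξ : ℂ) := by
      linear_combination (-((rdot y ξ : ℂ))) * Complex.I_sq
    rw [hI, Complex.exp_add, Complex.ofReal_exp]
    ring
  simp only
  rw [hgy y₁, hgy y₂]
  exact hkeyres
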